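/- arXiv:2509.08902 — 5 statements merged into one kernel-verified Lean document; each statement's English description precedes it below -/
import Mathlib

section
/- Let X be a real Banach space, T > 0, H ≥ 0, L_f ≥ 0 and L_τ ≥ 0. Suppose u : ℝ → X satisfies ‖u(t) − u(s)‖ ≤ H·|t − s|^{1/2} for all s, t ∈ (−∞, T]; suppose f : ℝ × X × X → X satisfies ‖f(t₁,v₁,w₁) − f(t₂,v₂,w₂)‖ ≤ L_f·(|t₁ − t₂| + ‖v₁ − v₂‖ + ‖w₁ − w₂‖) for all arguments; and suppose τ : ℝ × X → ℝ is nonnegative and satisfies |τ(t₁,v₁) − τ(t₂,v₂)| ≤ L_τ·(|t₁ − t₂| + ‖v₁ − v₂‖) for all arguments. Define g(t) := f(t, u(t), u(t − τ(t,u(t)))). Then for all 0 ≤ s ≤ t ≤ T, ‖g(t) − g(s)‖ ≤ L_f·(T^{3/4} + H·T^{1/4} + H·((1 + L_τ)·T^{1/2} + L_τ·H)^{1/2}) · |t − s|^{1/4}; in particular g is 1/4-Hölder continuous on [0, T]. -/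
/-!
By the Lipschitz bound on `f`, `‖g t - g s‖` is controlled by `|t - s|`, `‖u t - u s‖` and the
difference of the delayed values. Since `τ ≥ 0` the delayed times stay in `(-∞, T]`, and by the
Lipschitz bound on `τ` they differ by `O(|t - s| ^ (1/2))`, so the `1/2`-Hölder bound on `u`
makes the delayed values differ by `O(|t - s| ^ (1/4))`. The constant collects the factors
`T ^ (α - 1/4)` from `|t - s| ^ α ≤ T ^ (α - 1/4) * |t - s| ^ (1/4)` on `[0, T]`.
-/

lemma Real.rpow_le_rpow_mul_rpow_of_add_eq {δ T α β γ : ℝ} (hδ : 0 ≤ δ) (hδT : δ ≤ T)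
    (hγ : 0 ≤ γ) (hβ : 0 ≤ β) (hα : γ + β = α) : δ ^ α ≤ T ^ γ * δ ^ β := by
  rw [← hα, Real.rpow_add_of_nonneg hδ hγ hβ]
  gcongr

section Delay

variable {X : Type*} [NormedAddCommGroup X] {u : ℝ → X} {τ : ℝ → X → ℝ} {T H Lτ : ℝ}

lemma abs_delayed_time_sub_le
    (hτ : ∀ (t₁ t₂ : ℝ) (v₁ v₂ : X), |τ t₁ v₁ - τ t₂ v₂| ≤ Lτ * (|t₁ - t₂| + ‖v₁ - v₂‖))
    (a b : ℝ) (v w : X) :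
    |a - τ a v - (b - τ b w)| ≤ (1 + Lτ) * |a - b| + Lτ * ‖v - w‖ :=
  calc |a - τ a v - (b - τ b w)| = |(a - b) - (τ a v - τ b w)| := by ring_nf
    _ ≤ |a - b| + |τ a v - τ b w| := abs_sub _ _
    _ ≤ |a - b| + Lτ * (|a - b| + ‖v - w‖) := by gcongr; exact hτ a b v w
    _ = (1 + Lτ) * |a - b| + Lτ * ‖v - w‖ := by ring

lemma norm_delayed_sub_le (hH : 0 ≤ H) (hLτ : 0 ≤ Lτ)
    (hu : ∀ s t : ℝ, s ≤ T → t ≤ T → ‖u t - u s‖ ≤ H * |t - s| ^ ((1:ℝ)/2))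
    (hτ_nonneg : ∀ (t : ℝ) (v : X), 0 ≤ τ t v)
    (hτ : ∀ (t₁ t₂ : ℝ) (v₁ v₂ : X), |τ t₁ v₁ - τ t₂ v₂| ≤ Lτ * (|t₁ - t₂| + ‖v₁ - v₂‖))
    {s t : ℝ} (hs : s ≤ T) (ht : t ≤ T) (hst : |t - s| ≤ T) :
    ‖u (t - τ t (u t)) - u (s - τ s (u s))‖ ≤
      H * ((1 + Lτ) * T ^ ((1:ℝ)/2) + Lτ * H) ^ ((1:ℝ)/2) * |t - s| ^ ((1:ℝ)/4) := by
  set K := (1 + Lτ) * T ^ ((1:ℝ)/2) + Lτ * H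
  have hδ : 0 ≤ |t - s| := abs_nonneg _
  have hT : 0 ≤ T := hδ.trans hst
  have hK : 0 ≤ K := by positivity
  have hδ_le : |t - s| ≤ T ^ ((1:ℝ)/2) * |t - s| ^ ((1:ℝ)/2) := by
    simpa using Real.rpow_le_rpow_mul_rpow_of_add_eq hδ hst (α := 1) (by norm_num) (by norm_num)
      (by norm_num : (1:ℝ)/2 + 1/2 = 1)
  have hΔ : |t - τ t (u t) - (s - τ s (u s))| ≤ K * |t - s| ^ ((1:ℝ)/2) :=
    calc |t - τ t (u t) - (s - τ s (u s))| ≤ (1 + Lτ) * |t - s| + Lτ * ‖u t - u s‖ :=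
          abs_delayed_time_sub_le hτ t s (u t) (u s)
      _ ≤ (1 + Lτ) * (T ^ ((1:ℝ)/2) * |t - s| ^ ((1:ℝ)/2)) +
            Lτ * (H * |t - s| ^ ((1:ℝ)/2)) := by
          gcongr
          exact hu s t hs ht
      _ = K * |t - s| ^ ((1:ℝ)/2) := by ring
  calc ‖u (t - τ t (u t)) - u (s - τ s (u s))‖
      ≤ H * |t - τ t (u t) - (s - τ s (u s))| ^ ((1:ℝ)/2) :=
        hu _ _ (by linarith [hτ_nonneg s (u s)]) (by linarith [hτ_nonneg t (u t)])
    _ ≤ H * (K * |t - s| ^ ((1:ℝ)/2)) ^ ((1:ℝ)/2) := by gcongr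
    _ = H * K ^ ((1:ℝ)/2) * |t - s| ^ ((1:ℝ)/4) := by
        rw [Real.mul_rpow hK (by positivity), ← Real.rpow_mul hδ]
        norm_num [mul_assoc]

end Delay

theorem composed_nonlinearity_quarter_holder_general
    (X : Type*) [NormedAddCommGroup X]
    (T H Lf Lτ : ℝ) (hH : 0 ≤ H) (hLf : 0 ≤ Lf) (hLτ : 0 ≤ Lτ)
    (u : ℝ → X) (f : ℝ → X → X → X) (τ : ℝ → X → ℝ)
    (hu : ∀ s t : ℝ, s ≤ T → t ≤ T → ‖u t - u s‖ ≤ H * |t - s| ^ ((1:ℝ)/2))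
    (hf : ∀ (t₁ t₂ : ℝ) (v₁ v₂ w₁ w₂ : X),
      ‖f t₁ v₁ w₁ - f t₂ v₂ w₂‖ ≤ Lf * (|t₁ - t₂| + ‖v₁ - v₂‖ + ‖w₁ - w₂‖))
    (hτ_nonneg : ∀ (t : ℝ) (v : X), 0 ≤ τ t v)
    (hτ : ∀ (t₁ t₂ : ℝ) (v₁ v₂ : X),
      |τ t₁ v₁ - τ t₂ v₂| ≤ Lτ * (|t₁ - t₂| + ‖v₁ - v₂‖))
    (g : ℝ → X)
    (hg : ∀ t : ℝ, g t = f t (u t) (u (t - τ t (u t)))) :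
    ∀ s t : ℝ, 0 ≤ s → s ≤ t → t ≤ T →
      ‖g t - g s‖ ≤
        Lf * (T ^ ((3:ℝ)/4) + H * T ^ ((1:ℝ)/4) +
          H * ((1 + Lτ) * T ^ ((1:ℝ)/2) + Lτ * H) ^ ((1:ℝ)/2)) * |t - s| ^ ((1:ℝ)/4) := by
  intro s t hs hst htT
  have hsT : s ≤ T := hst.trans htT
  have hδT : |t - s| ≤ T := abs_sub_le_of_nonneg_of_le (hs.trans hst) htT hs hsT
  have hδ : 0 ≤ |t - s| := abs_nonneg _
  have hδ_le : |t - s| ≤ T ^ ((3:ℝ)/4) * |t - s| ^ ((1:ℝ)/4) := by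
    simpa using Real.rpow_le_rpow_mul_rpow_of_add_eq hδ hδT (α := 1) (by norm_num) (by norm_num)
      (by norm_num : (3:ℝ)/4 + 1/4 = 1)
  have hδ_half : |t - s| ^ ((1:ℝ)/2) ≤ T ^ ((1:ℝ)/4) * |t - s| ^ ((1:ℝ)/4) :=
    Real.rpow_le_rpow_mul_rpow_of_add_eq hδ hδT (by norm_num) (by norm_num) (by norm_num)
  have hu_st : ‖u t - u s‖ ≤ H * (T ^ ((1:ℝ)/4) * |t - s| ^ ((1:ℝ)/4)) :=
    (hu s t hsT htT).trans (by gcongr)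
  have hdelay := norm_delayed_sub_le hH hLτ hu hτ_nonneg hτ hsT htT hδT
  calc ‖g t - g s‖
      ≤ Lf * (|t - s| + ‖u t - u s‖ + ‖u (t - τ t (u t)) - u (s - τ s (u s))‖) := by
        rw [hg t, hg s]
        exact hf _ _ _ _ _ _
    _ ≤ Lf * (T ^ ((3:ℝ)/4) * |t - s| ^ ((1:ℝ)/4) + H * (T ^ ((1:ℝ)/4) * |t - s| ^ ((1:ℝ)/4)) +
          H * ((1 + Lτ) * T ^ ((1:ℝ)/2) + Lτ * H) ^ ((1:ℝ)/2) * |t - s| ^ ((1:ℝ)/4)) := by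
        gcongr
    _ = _ := by ring

/-- The composed nonlinearity `g(t) = f(t, u(t), u(t − τ(t,u(t))))` is
`1/4`-Hölder continuous on `[0, T]` when `u` is `1/2`-Hölder continuous on `(−∞, T]`
and `f`, `τ` are Lipschitz continuous, with the explicit constant. -/
theorem composed_nonlinearity_quarter_holder
    (X : Type*) [NormedAddCommGroup X] [NormedSpace ℝ X] [CompleteSpace X]
    (T H Lf Lτ : ℝ) (hT : 0 < T) (hH : 0 ≤ H) (hLf : 0 ≤ Lf) (hLτ : 0 ≤ Lτ)
    (u : ℝ → X) (f : ℝ → X → X → X) (τ : ℝ → X → ℝ)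
    (hu : ∀ s t : ℝ, s ≤ T → t ≤ T → ‖u t - u s‖ ≤ H * |t - s| ^ ((1:ℝ)/2))
    (hf : ∀ (t₁ t₂ : ℝ) (v₁ v₂ w₁ w₂ : X),
      ‖f t₁ v₁ w₁ - f t₂ v₂ w₂‖ ≤ Lf * (|t₁ - t₂| + ‖v₁ - v₂‖ + ‖w₁ - w₂‖))
    (hτ_nonneg : ∀ (t : ℝ) (v : X), 0 ≤ τ t v)
    (hτ : ∀ (t₁ t₂ : ℝ) (v₁ v₂ : X),
      |τ t₁ v₁ - τ t₂ v₂| ≤ Lτ * (|t₁ - t₂| + ‖v₁ - v₂‖))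
    (g : ℝ → X)
    (hg : ∀ t : ℝ, g t = f t (u t) (u (t - τ t (u t)))) :
    ∀ s t : ℝ, 0 ≤ s → s ≤ t → t ≤ T →
      ‖g t - g s‖ ≤
        Lf * (T ^ ((3:ℝ)/4) + H * T ^ ((1:ℝ)/4) +
          H * ((1 + Lτ) * T ^ ((1:ℝ)/2) + Lτ * H) ^ ((1:ℝ)/2)) * |t - s| ^ ((1:ℝ)/4) :=
  composed_nonlinearity_quarter_holder_general X T H Lf Lτ hH hLf hLτ u f τ hu hf hτ_nonneg hτ g hg
end

section
/- Let X be a real Banach space, t ∈ ℝ, L_u, L_f, L_τ, S ≥ 0. Suppose u, w : ℝ → X, that u satisfies ‖u(a) − u(b)‖ ≤ L_u·|a − b| for all a, b ∈ (−∞, t], and that ‖u(s) − w(s)‖ ≤ S for all s ≤ t. Suppose f : ℝ × X × X → X satisfies ‖f(t₁,v₁,w₁) − f(t₂,v₂,w₂)‖ ≤ L_f·(|t₁ − t₂| + ‖v₁ − v₂‖ + ‖w₁ − w₂‖) for all arguments, and τ : ℝ × X → ℝ is nonnegative and satisfies |τ(t₁,v₁) − τ(t₂,v₂)| ≤ L_τ·(|t₁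 − t₂| + ‖v₁ − v₂‖) for all arguments. Then ‖f(t, u(t), u(t − τ(t,u(t)))) − f(t, w(t), w(t − τ(t,w(t))))‖ ≤ (2·L_f + L_f·L_u·L_τ)·S. -/
/-!
Both deviated arguments `a = t - τ(t, u t)` and `b = t - τ(t, w t)` lie in `(−∞, t]`, and the
Lipschitz bound for `τ` at the common time `t` gives `|a - b| ≤ L_τ ‖u t - w t‖ ≤ L_τ S`.
Passing through `u b` yields `‖u a - w b‖ ≤ L_u |a - b| + S ≤ L_u L_τ S + S`, and the Lipschitz
bound for `f` at the common time `t` adds `‖u t - w t‖ ≤ S`.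
-/

section

variable {E : Type*} [SeminormedAddCommGroup E]

lemma abs_sub_deviated_le {Lτ : ℝ} {τ : ℝ → E → ℝ}
    (hτ : ∀ (t₁ t₂ : ℝ) (v₁ v₂ : E), |τ t₁ v₁ - τ t₂ v₂| ≤ Lτ * (|t₁ - t₂| + ‖v₁ - v₂‖))
    (t : ℝ) (v₁ v₂ : E) : |(t - τ t v₁) - (t - τ t v₂)| ≤ Lτ * ‖v₁ - v₂‖ :=
  calc |(t - τ t v₁) - (t - τ t v₂)| = |τ t v₁ - τ t v₂| := by
        rw [sub_sub_sub_cancel_left, abs_sub_comm]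
    _ ≤ Lτ * ‖v₁ - v₂‖ := by simpa using hτ t t v₁ v₂

lemma norm_sub_le_mul_abs_add {u w : ℝ → E} {t Lu S : ℝ}
    (hu : ∀ a b : ℝ, a ≤ t → b ≤ t → ‖u a - u b‖ ≤ Lu * |a - b|)
    (huw : ∀ s : ℝ, s ≤ t → ‖u s - w s‖ ≤ S) {a b : ℝ} (ha : a ≤ t) (hb : b ≤ t) :
    ‖u a - w b‖ ≤ Lu * |a - b| + S :=
  (norm_sub_le_norm_sub_add_norm_sub _ (u b) _).trans (add_le_add (hu a b ha hb) (huw b hb))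

end

theorem delayed_term_stability_general
    (X : Type*) [NormedAddCommGroup X]
    (t Lu Lf Lτ S : ℝ) (hLu : 0 ≤ Lu) (hLf : 0 ≤ Lf) (hLτ : 0 ≤ Lτ)
    (u w : ℝ → X) (f : ℝ → X → X → X) (τ : ℝ → X → ℝ)
    (hu : ∀ a b : ℝ, a ≤ t → b ≤ t → ‖u a - u b‖ ≤ Lu * |a - b|)
    (huw : ∀ s : ℝ, s ≤ t → ‖u s - w s‖ ≤ S)
    (hf : ∀ (t₁ t₂ : ℝ) (v₁ v₂ w₁ w₂ : X),
      ‖f t₁ v₁ w₁ - f t₂ v₂ w₂‖ ≤ Lf * (|t₁ - t₂| + ‖v₁ - v₂‖ + ‖w₁ - w₂‖))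
    (hτ_nonneg : ∀ (s : ℝ) (v : X), 0 ≤ τ s v)
    (hτ : ∀ (t₁ t₂ : ℝ) (v₁ v₂ : X),
      |τ t₁ v₁ - τ t₂ v₂| ≤ Lτ * (|t₁ - t₂| + ‖v₁ - v₂‖)) :
    ‖f t (u t) (u (t - τ t (u t))) - f t (w t) (w (t - τ t (w t)))‖ ≤
      (2 * Lf + Lf * Lu * Lτ) * S := by
  set a := t - τ t (u t)
  set b := t - τ t (w t)
  have hS_t : ‖u t - w t‖ ≤ S := huw t le_rfl
  have hab : |a - b| ≤ Lτ * S :=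
    (abs_sub_deviated_le hτ t _ _).trans (mul_le_mul_of_nonneg_left hS_t hLτ)
  have hdelayed : ‖u a - w b‖ ≤ Lu * (Lτ * S) + S :=
    (norm_sub_le_mul_abs_add hu huw (sub_le_self _ (hτ_nonneg _ _))
      (sub_le_self _ (hτ_nonneg _ _))).trans (by gcongr)
  calc ‖f t (u t) (u a) - f t (w t) (w b)‖ ≤ Lf * (‖u t - w t‖ + ‖u a - w b‖) := by
        simpa using hf t t (u t) (w t) (u a) (w b)
    _ ≤ Lf * (S + (Lu * (Lτ * S) + S)) := by gcongr
    _ = (2 * Lf + Lf * Lu * Lτ) * S := by ring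

/-- Stability estimate for the full nonlinear delayed term: if `u` is `L_u`-Lipschitz
on `(−∞, t]` and `‖u − w‖ ≤ S` on `(−∞, t]`, then the difference of the composed
nonlinearities at `t` is bounded by `(2 L_f + L_f L_u L_τ) S`. -/
theorem delayed_term_stability
    (X : Type*) [NormedAddCommGroup X] [NormedSpace ℝ X] [CompleteSpace X]
    (t Lu Lf Lτ S : ℝ) (hLu : 0 ≤ Lu) (hLf : 0 ≤ Lf) (hLτ : 0 ≤ Lτ) (hS : 0 ≤ S)
    (u w : ℝ → X) (f : ℝ → X → X → X) (τ : ℝ → X → ℝ)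
    (hu : ∀ a b : ℝ, a ≤ t → b ≤ t → ‖u a - u b‖ ≤ Lu * |a - b|)
    (huw : ∀ s : ℝ, s ≤ t → ‖u s - w s‖ ≤ S)
    (hf : ∀ (t₁ t₂ : ℝ) (v₁ v₂ w₁ w₂ : X),
      ‖f t₁ v₁ w₁ - f t₂ v₂ w₂‖ ≤ Lf * (|t₁ - t₂| + ‖v₁ - v₂‖ + ‖w₁ - w₂‖))
    (hτ_nonneg : ∀ (s : ℝ) (v : X), 0 ≤ τ s v)
    (hτ : ∀ (t₁ t₂ : ℝ) (v₁ v₂ : X),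
      |τ t₁ v₁ - τ t₂ v₂| ≤ Lτ * (|t₁ - t₂| + ‖v₁ - v₂‖)) :
    ‖f t (u t) (u (t - τ t (u t))) - f t (w t) (w (t - τ t (w t)))‖ ≤
      (2 * Lf + Lf * Lu * Lτ) * S :=
  delayed_term_stability_general X t Lu Lf Lτ S hLu hLf hLτ u w f τ hu huw hf hτ_nonneg hτ
end

section
/- Let X be a real Banach space, A : X → X a bounded linear operator, T > 0, L_f, L_τ ≥ 0. Suppose f : ℝ × X × X → X satisfies ‖f(t₁,v₁,w₁) − f(t₂,v₂,w₂)‖ ≤ L_f·(|t₁ − t₂| + ‖v₁ − v₂‖ + ‖w₁ − w₂‖) for all arguments, and τ : ℝ × X → ℝ is nonnegative and satisfies |τ(t₁,v₁) − τ(t₂,v₂)| ≤ L_τ·(|t₁ − t₂| + ‖v₁ − v₂‖) for all arguments. Let u, w : ℝ → X be continuous on (−∞, T], with u(t) = w(t) for all t ≤ 0, and suppose u is Lipschitz continuous on (−∞, T]. If both u and w satisfy the mild-solution equation v(t) = exp(−t A) v(0) + ∫₀ᵗ exp(−(t − s) A) f(s, v(s), v(s − τ(s, v(s)))) ds for all t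 ∈ [0, T], then u(t) = w(t) for all t ∈ [0, T]. -/
/-!
The difference `e t = ‖u t - w t‖` satisfies a Volterra-type inequality `e t ≤ C ∫₀ᵗ g` for every
continuous monotone majorant `g` of `e`: the propagator `exp (-(t - s) • A)` is bounded by
`exp (‖A‖ T)`; since `u` is Lipschitz, moving from the delayed argument of `u` to that of `w`
costs at most `Lu Lτ e s`; and since `τ ≥ 0` and the histories agree, the delayed difference is
controlled by the majorant at the current time `s`. Iterating from a uniform bound `M` gives
`e t ≤ M (C t)ⁿ / n!`, which tends to `0`.
-/

open Set Filter Topology NormedSpace intervalIntegral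
open scoped Nat

theorem NormedSpace.norm_exp_le_exp_norm {𝔸 : Type*} [NormedRing 𝔸] [NormedAlgebra ℝ 𝔸]
    [CompleteSpace 𝔸] (h1 : ‖(1 : 𝔸)‖ ≤ 1) (x : 𝔸) : ‖exp x‖ ≤ Real.exp ‖x‖ := by
  rw [exp_eq_tsum ℝ, Real.exp_eq_exp_ℝ, exp_eq_tsum ℝ]
  refine (norm_tsum_le_tsum_norm (norm_expSeries_summable' x)).trans <|
    (norm_expSeries_summable' x).tsum_le_tsum (fun n => ?_) (expSeries_summable' (𝕂 := ℝ) ‖x‖)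
  rw [norm_smul, smul_eq_mul, norm_inv, Real.norm_natCast]
  gcongr
  cases n with
  | zero => simpa using h1
  | succ n => exact norm_pow_le' x n.succ_pos

theorem ContinuousLinearMap.norm_exp_neg_smul_le {E : Type*} [NormedAddCommGroup E]
    [NormedSpace ℝ E] [CompleteSpace E] (A : E →L[ℝ] E) {r T : ℝ} (hr : 0 ≤ r) (hrT : r ≤ T) :
    ‖exp (-(r • A))‖ ≤ Real.exp (‖A‖ * T) := by
  refine (norm_exp_le_exp_norm norm_id_le _).trans (Real.exp_le_exp.2 ?_)
  rw [norm_neg, norm_smul, Real.norm_of_nonneg hr, mul_comm]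
  gcongr

theorem mul_integral_mul_pow_div_factorial (C M t : ℝ) (n : ℕ) :
    C * ∫ s in (0:ℝ)..t, M * (C * s) ^ n / n ! = M * (C * t) ^ (n + 1) / (n + 1)! := by
  have hpoly : ∀ s : ℝ, M * (C * s) ^ n / n ! = M * C ^ n / n ! * s ^ n := fun s => by ring
  simp_rw [hpoly]
  rw [integral_const_mul, integral_pow, Nat.factorial_succ]
  push_cast
  field_simp
  ring

theorem nonpos_of_le_mul_integral {e : ℝ → ℝ} {T C M : ℝ} (hC : 0 ≤ C) (hM : 0 ≤ M)
    (he : ∀ t ∈ Icc 0 T, e t ≤ M)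
    (hstep : ∀ g : ℝ → ℝ, Continuous g → MonotoneOn g (Icc 0 T) →
      (∀ s ∈ Icc 0 T, e s ≤ g s) → ∀ t ∈ Icc 0 T, e t ≤ C * ∫ s in (0:ℝ)..t, g s) :
    ∀ t ∈ Icc 0 T, e t ≤ 0 := by
  have hiter : ∀ n : ℕ, ∀ t ∈ Icc 0 T, e t ≤ M * (C * t) ^ n / n ! := by
    intro n
    induction n with
    | zero => simpa using he
    | succ n ih =>
      intro t ht
      rw [← mul_integral_mul_pow_div_factorial]
      refine hstep _ (by fun_prop) (fun a ha b _ hab => ?_) ih t ht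
      have := ha.1
      gcongr
  intro t ht
  have hlim : Tendsto (fun n : ℕ => M * (C * t) ^ n / n !) atTop (𝓝 0) := by
    simpa [mul_div_assoc] using (FloorSemiring.tendsto_pow_div_factorial_atTop (C * t)).const_mul M
  exact ge_of_tendsto' hlim fun n => hiter n t ht

section Lipschitz

variable {E F : Type*} [SeminormedAddCommGroup E] [SeminormedAddCommGroup F]

theorem continuous_uncurry_of_norm_sub_le {g : ℝ → E → F} {L : ℝ} (hL : 0 ≤ L)
    (hg : ∀ t₁ t₂ v₁ v₂, ‖g t₁ v₁ - g t₂ v₂‖ ≤ L * (|t₁ - t₂| + ‖v₁ - v₂‖)) :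
    Continuous (Function.uncurry g) := by
  refine (LipschitzWith.of_dist_le' (K := 2 * L) fun p q => ?_).continuous
  have h₁ : |p.1 - q.1| ≤ ‖p - q‖ := norm_fst_le (p - q)
  have h₂ : ‖p.2 - q.2‖ ≤ ‖p - q‖ := norm_snd_le (p - q)
  rw [dist_eq_norm, dist_eq_norm]
  calc _ ≤ L * (|p.1 - q.1| + ‖p.2 - q.2‖) := hg _ _ _ _
    _ ≤ 2 * L * ‖p - q‖ := by nlinarith

theorem continuous_uncurry₃_of_norm_sub_le {f : ℝ → E → E → F} {L : ℝ} (hL : 0 ≤ L)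
    (hf : ∀ t₁ t₂ v₁ v₂ w₁ w₂,
      ‖f t₁ v₁ w₁ - f t₂ v₂ w₂‖ ≤ L * (|t₁ - t₂| + ‖v₁ - v₂‖ + ‖w₁ - w₂‖)) :
    Continuous fun p : ℝ × E × E => f p.1 p.2.1 p.2.2 := by
  refine continuous_uncurry_of_norm_sub_le (g := fun t (p : E × E) => f t p.1 p.2)
    (by positivity : 0 ≤ 2 * L) fun t₁ t₂ p q => ?_
  have h₁ : ‖p.1 - q.1‖ ≤ ‖p - q‖ := norm_fst_le (p - q)
  have h₂ : ‖p.2 - q.2‖ ≤ ‖p - q‖ := norm_snd_le (p - q)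
  calc _ ≤ L * (|t₁ - t₂| + ‖p.1 - q.1‖ + ‖p.2 - q.2‖) := hf _ _ _ _ _ _
    _ ≤ 2 * L * (|t₁ - t₂| + ‖p - q‖) := by nlinarith [abs_nonneg (t₁ - t₂)]

end Lipschitz

section DelayNonlinearity

variable {X : Type*} [SeminormedAddCommGroup X] {f : ℝ → X → X → X} {τ : ℝ → X → ℝ}
  {u w : ℝ → X} {g : ℝ → ℝ} {T Lf Lτ Lu : ℝ}

def delayNonlinearity (f : ℝ → X → X → X) (τ : ℝ → X → ℝ) (v : ℝ → X) (s : ℝ) : X :=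
  f s (v s) (v (s - τ s (v s)))

theorem norm_sub_delayed_le (hLτ : 0 ≤ Lτ) (hLu : 0 ≤ Lu) (hτ_nonneg : ∀ s v, 0 ≤ τ s v)
    (hτ : ∀ s v₁ v₂, |τ s v₁ - τ s v₂| ≤ Lτ * ‖v₁ - v₂‖)
    (hu_lip : ∀ a b, a ≤ T → b ≤ T → ‖u a - u b‖ ≤ Lu * |a - b|)
    (h_hist : ∀ t ≤ 0, u t = w t) (hg_mono : MonotoneOn g (Icc 0 T))
    (hg : ∀ s ∈ Icc 0 T, ‖u s - w s‖ ≤ g s) {s : ℝ} (hs : s ∈ Icc 0 T) :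
    ‖u (s - τ s (u s)) - w (s - τ s (w s))‖ ≤ (1 + Lu * Lτ) * g s := by
  set σu := s - τ s (u s)
  set σw := s - τ s (w s)
  have hσu : σu ≤ s := sub_le_self _ (hτ_nonneg _ _)
  have hσw : σw ≤ s := sub_le_self _ (hτ_nonneg _ _)
  have hg_nonneg : 0 ≤ g s := (norm_nonneg _).trans (hg s hs)
  have h_shift : ‖u σu - u σw‖ ≤ Lu * Lτ * g s := calc
    ‖u σu - u σw‖ ≤ Lu * |τ s (w s) - τ s (u s)| := by
      simpa [σu, σw] using hu_lip σu σw (hσu.trans hs.2) (hσw.trans hs.2)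
    _ ≤ Lu * (Lτ * ‖w s - u s‖) := by gcongr; exact hτ _ _ _
    _ ≤ Lu * Lτ * g s := by rw [norm_sub_rev, ← mul_assoc]; gcongr; exact hg s hs
  have h_diff : ‖u σw - w σw‖ ≤ g s := by
    rcases le_or_gt σw 0 with h | h
    · rwa [h_hist σw h, sub_self, norm_zero]
    · exact (hg σw ⟨h.le, hσw.trans hs.2⟩).trans (hg_mono ⟨h.le, hσw.trans hs.2⟩ hs hσw)
  calc ‖u σu - w σw‖ ≤ ‖u σu - u σw‖ + ‖u σw - w σw‖ := norm_sub_le_norm_sub_add_norm_sub _ _ _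
    _ ≤ (1 + Lu * Lτ) * g s := by linarith

theorem norm_sub_delayNonlinearity_le (hLf : 0 ≤ Lf) (hLτ : 0 ≤ Lτ) (hLu : 0 ≤ Lu)
    (hf : ∀ s v₁ v₂ w₁ w₂, ‖f s v₁ w₁ - f s v₂ w₂‖ ≤ Lf * (‖v₁ - v₂‖ + ‖w₁ - w₂‖))
    (hτ_nonneg : ∀ s v, 0 ≤ τ s v) (hτ : ∀ s v₁ v₂, |τ s v₁ - τ s v₂| ≤ Lτ * ‖v₁ - v₂‖)
    (hu_lip : ∀ a b, a ≤ T → b ≤ T → ‖u a - u b‖ ≤ Lu * |a - b|)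
    (h_hist : ∀ t ≤ 0, u t = w t) (hg_mono : MonotoneOn g (Icc 0 T))
    (hg : ∀ s ∈ Icc 0 T, ‖u s - w s‖ ≤ g s) {s : ℝ} (hs : s ∈ Icc 0 T) :
    ‖delayNonlinearity f τ u s - delayNonlinearity f τ w s‖ ≤ Lf * (2 + Lu * Lτ) * g s := calc
  _ ≤ Lf * (g s + (1 + Lu * Lτ) * g s) := by
    refine (hf _ _ _ _ _).trans ?_
    gcongr
    exacts [hg s hs, norm_sub_delayed_le hLτ hLu hτ_nonneg hτ hu_lip h_hist hg_mono hg hs]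
  _ = Lf * (2 + Lu * Lτ) * g s := by ring

theorem continuousOn_delayNonlinearity (hf : Continuous fun p : ℝ × X × X => f p.1 p.2.1 p.2.2)
    (hτ : Continuous fun p : ℝ × X => τ p.1 p.2) (hτ_nonneg : ∀ s v, 0 ≤ τ s v) {v : ℝ → X}
    (hv : ContinuousOn v (Iic T)) : ContinuousOn (delayNonlinearity f τ v) (Iic T) := by
  have hdelay : ContinuousOn (fun s => s - τ s (v s)) (Iic T) :=
    continuousOn_id.sub (hτ.comp_continuousOn (continuousOn_id.prodMk hv))
  have hmaps : MapsTo (fun s => s - τ s (v s)) (Iic T) (Iic T) := fun s hs =>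
    (sub_le_self _ (hτ_nonneg _ _)).trans hs
  exact hf.comp_continuousOn (continuousOn_id.prodMk (hv.prodMk (hv.comp hdelay hmaps)))

end DelayNonlinearity

section MildSolution

variable {X : Type*} [NormedAddCommGroup X] [NormedSpace ℝ X] [CompleteSpace X]
  {A : X →L[ℝ] X} {f : ℝ → X → X → X} {τ : ℝ → X → ℝ} {T : ℝ} {u w : ℝ → X}

def IsMildSolution (A : X →L[ℝ] X) (f : ℝ → X → X → X) (τ : ℝ → X → ℝ) (T : ℝ) (v : ℝ → X) :
    Prop :=
  ∀ t ∈ Icc (0:ℝ) T, v t = exp (-(t • A)) (v 0) +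
    ∫ s in (0:ℝ)..t, exp (-((t - s) • A)) (delayNonlinearity f τ v s)

theorem ContinuousOn.exp_neg_smul_apply {F : ℝ → X} {S : Set ℝ} (hF : ContinuousOn F S) (t : ℝ) :
    ContinuousOn (fun s => exp (-((t - s) • A)) (F s)) S := by
  -- `NormedSpace.exp_continuous` would need a `NormedAlgebra ℚ (X →L[ℝ] X)` instance.
  have hexp : Continuous (exp : (X →L[ℝ] X) → X →L[ℝ] X) :=
    continuous_iff_continuousAt.2 fun B => (exp_analytic (𝕂 := ℝ) B).continuousAt
  exact (hexp.comp (by fun_prop)).continuousOn.clm_apply hF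

theorem IsMildSolution.norm_sub_le_integral (hu : IsMildSolution A f τ T u)
    (hw : IsMildSolution A f τ T w) (h0 : u 0 = w 0)
    (hFu : ContinuousOn (delayNonlinearity f τ u) (Icc 0 T))
    (hFw : ContinuousOn (delayNonlinearity f τ w) (Icc 0 T)) {g : ℝ → ℝ} (hg : Continuous g)
    (hFg : ∀ s ∈ Icc 0 T, ‖delayNonlinearity f τ u s - delayNonlinearity f τ w s‖ ≤ g s)
    {t : ℝ} (ht : t ∈ Icc 0 T) :
    ‖u t - w t‖ ≤ Real.exp (‖A‖ * T) * ∫ s in (0:ℝ)..t, g s := by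
  have hsub : uIcc 0 t ⊆ Icc 0 T := by
    rw [uIcc_of_le ht.1]; exact Icc_subset_Icc_right ht.2
  rw [hu t ht, hw t ht, h0, add_sub_add_left_eq_sub,
    ← integral_sub ((hFu.mono hsub).exp_neg_smul_apply t).intervalIntegrable
      ((hFw.mono hsub).exp_neg_smul_apply t).intervalIntegrable, ← integral_const_mul]
  refine norm_integral_le_of_norm_le ht.1 (MeasureTheory.ae_of_all _ fun s hs => ?_)
    ((hg.const_mul _).intervalIntegrable _ _)
  rw [← map_sub]
  calc _ ≤ ‖exp (-((t - s) • A))‖ * ‖delayNonlinearity f τ u s - delayNonlinearity f τ w s‖ :=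
        ContinuousLinearMap.le_opNorm _ _
    _ ≤ Real.exp (‖A‖ * T) * g s :=
        mul_le_mul (A.norm_exp_neg_smul_le (sub_nonneg.2 hs.2) (by linarith [hs.1, ht.2]))
          (hFg s ⟨hs.1.le, hs.2.trans ht.2⟩) (norm_nonneg _) (Real.exp_pos _).le

end MildSolution

theorem mild_solution_unique_general
    (X : Type*) [NormedAddCommGroup X] [NormedSpace ℝ X] [CompleteSpace X]
    (A : X →L[ℝ] X) (T Lf Lτ : ℝ) (hLf : 0 ≤ Lf) (hLτ : 0 ≤ Lτ)
    (f : ℝ → X → X → X) (τ : ℝ → X → ℝ) (u w : ℝ → X)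
    (hf : ∀ (t₁ t₂ : ℝ) (v₁ v₂ w₁ w₂ : X),
      ‖f t₁ v₁ w₁ - f t₂ v₂ w₂‖ ≤ Lf * (|t₁ - t₂| + ‖v₁ - v₂‖ + ‖w₁ - w₂‖))
    (hτ_nonneg : ∀ (s : ℝ) (v : X), 0 ≤ τ s v)
    (hτ : ∀ (t₁ t₂ : ℝ) (v₁ v₂ : X),
      |τ t₁ v₁ - τ t₂ v₂| ≤ Lτ * (|t₁ - t₂| + ‖v₁ - v₂‖))
    (hu_cont : ContinuousOn u (Set.Iic T)) (hw_cont : ContinuousOn w (Set.Iic T))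
    (h_hist : ∀ t : ℝ, t ≤ 0 → u t = w t)
    (hu_lip : ∃ Lu : ℝ, 0 ≤ Lu ∧ ∀ a b : ℝ, a ≤ T → b ≤ T → ‖u a - u b‖ ≤ Lu * |a - b|)
    (hmild_u : ∀ t ∈ Set.Icc (0:ℝ) T,
      u t = (NormedSpace.exp (-(t • A))) (u 0) +
        ∫ s in (0:ℝ)..t, (NormedSpace.exp (-((t - s) • A)))
          (f s (u s) (u (s - τ s (u s)))))
    (hmild_w : ∀ t ∈ Set.Icc (0:ℝ) T,
      w t = (NormedSpace.exp (-(t • A))) (w 0) +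
        ∫ s in (0:ℝ)..t, (NormedSpace.exp (-((t - s) • A)))
          (f s (w s) (w (s - τ s (w s))))) :
    ∀ t ∈ Set.Icc (0:ℝ) T, u t = w t := by
  obtain ⟨Lu, hLu, hu_lip⟩ := hu_lip
  have hf_cont := continuous_uncurry₃_of_norm_sub_le hLf hf
  have hτ_cont := continuous_uncurry_of_norm_sub_le (g := τ) hLτ hτ
  have hFu := (continuousOn_delayNonlinearity hf_cont hτ_cont hτ_nonneg hu_cont).mono
    (Icc_subset_Iic_self (a := 0))
  have hFw := (continuousOn_delayNonlinearity hf_cont hτ_cont hτ_nonneg hw_cont).mono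
    (Icc_subset_Iic_self (a := 0))
  have hstep (g : ℝ → ℝ) (hg_cont : Continuous g) (hg_mono : MonotoneOn g (Icc 0 T))
      (hg : ∀ s ∈ Icc 0 T, ‖u s - w s‖ ≤ g s) (r : ℝ) (hr : r ∈ Icc 0 T) :
      ‖u r - w r‖ ≤ Real.exp (‖A‖ * T) * (Lf * (2 + Lu * Lτ)) * ∫ s in (0:ℝ)..r, g s := by
    rw [mul_assoc, ← integral_const_mul]
    refine IsMildSolution.norm_sub_le_integral hmild_u hmild_w (h_hist 0 le_rfl) hFu hFw
      (hg_cont.const_mul _) (fun s hs => ?_) hr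
    exact norm_sub_delayNonlinearity_le hLf hLτ hLu
      (fun s v₁ v₂ w₁ w₂ => by simpa using hf s s v₁ v₂ w₁ w₂) hτ_nonneg
      (fun s v₁ v₂ => by simpa using hτ s s v₁ v₂) hu_lip h_hist hg_mono hg hs
  obtain ⟨M, hM⟩ := isCompact_Icc.exists_bound_of_continuousOn
    ((hu_cont.sub hw_cont).mono (Icc_subset_Iic_self (a := 0)))
  intro t ht
  have hdiff := nonpos_of_le_mul_integral (e := fun t => ‖u t - w t‖) (by positivity)
    ((norm_nonneg _).trans (hM t ht)) hM hstep t ht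
  exact sub_eq_zero.1 (norm_le_zero_iff.1 hdiff)

/-- Uniqueness of mild solutions of the semilinear delay evolution equation
`u′ + A u = f(t, u(t), u(t − τ(t,u(t))))` with common history on `(−∞, 0]`,
in the case of a bounded operator `A`. -/
theorem mild_solution_unique
    (X : Type*) [NormedAddCommGroup X] [NormedSpace ℝ X] [CompleteSpace X]
    (A : X →L[ℝ] X) (T Lf Lτ : ℝ) (hT : 0 < T) (hLf : 0 ≤ Lf) (hLτ : 0 ≤ Lτ)
    (f : ℝ → X → X → X) (τ : ℝ → X → ℝ) (u w : ℝ → X)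
    (hf : ∀ (t₁ t₂ : ℝ) (v₁ v₂ w₁ w₂ : X),
      ‖f t₁ v₁ w₁ - f t₂ v₂ w₂‖ ≤ Lf * (|t₁ - t₂| + ‖v₁ - v₂‖ + ‖w₁ - w₂‖))
    (hτ_nonneg : ∀ (s : ℝ) (v : X), 0 ≤ τ s v)
    (hτ : ∀ (t₁ t₂ : ℝ) (v₁ v₂ : X),
      |τ t₁ v₁ - τ t₂ v₂| ≤ Lτ * (|t₁ - t₂| + ‖v₁ - v₂‖))
    (hu_cont : ContinuousOn u (Set.Iic T)) (hw_cont : ContinuousOn w (Set.Iic T))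
    (h_hist : ∀ t : ℝ, t ≤ 0 → u t = w t)
    (hu_lip : ∃ Lu : ℝ, 0 ≤ Lu ∧ ∀ a b : ℝ, a ≤ T → b ≤ T → ‖u a - u b‖ ≤ Lu * |a - b|)
    (hmild_u : ∀ t ∈ Set.Icc (0:ℝ) T,
      u t = (NormedSpace.exp (-(t • A))) (u 0) +
        ∫ s in (0:ℝ)..t, (NormedSpace.exp (-((t - s) • A)))
          (f s (u s) (u (s - τ s (u s)))))
    (hmild_w : ∀ t ∈ Set.Icc (0:ℝ) T,
      w t = (NormedSpace.exp (-(t • A))) (w 0) +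
        ∫ s in (0:ℝ)..t, (NormedSpace.exp (-((t - s) • A)))
          (f s (w s) (w (s - τ s (w s))))) :
    ∀ t ∈ Set.Icc (0:ℝ) T, u t = w t :=
  mild_solution_unique_general X A T Lf Lτ hLf hLτ f τ u w hf hτ_nonneg hτ hu_cont hw_cont h_hist
    hu_lip hmild_u hmild_w
end

section
/- Let X be a real Banach space, A : X → X a bounded linear operator, t_n ∈ ℝ, h > 0, c₂ ∈ (0, 1], and set C_s := sup_{σ ∈ [0, h]} ‖exp(−σ A)‖. Suppose f : ℝ × X × X → X satisfies ‖f(t₁,v₁,w₁) − f(t₂,v₂,w₂)‖ ≤ L_f·(|t₁ − t₂| + ‖v₁ − v₂‖ + ‖w₁ − w₂‖) for all arguments, and τ : ℝ × X → ℝ is nonnegative and satisfies |τ(t₁,v₁) − τ(t₂,v₂)| ≤ L_τ·(|t₁ − t₂| + ‖v₁ − v₂‖) for all arguments. Let U : (−∞, t_n] → X be continuous, u_n := U(t_n), t_{n2} := t_n + c₂ h, G₁ := f(t_n, u_n, U(t_n − τ(t_n, u_n))), U_{n2} := exp(−c₂ h A) u_n + (∫₀^{c₂h} exp(−(c₂h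 − σ) A) dσ)·G₁, and for θ ∈ [0, 1] define the weight operators W₁(θ) := ∫₀^{θh} exp(−(θh − σ) A) dσ and W₂(θ) := (1/(c₂ h))·∫₀^{θh} exp(−(θh − σ) A)·σ dσ. If L_f·C_s·h < 2·c₂, then there exists a unique continuous function V : [t_n, t_n + h] → X with V(t_n) = u_n such that for all θ ∈ [0, 1], V(t_n + θ h) = exp(−θ h A) u_n + (W₁(θ) − W₂(θ)) G₁ + W₂(θ)·f(t_{n2}, U_{n2}, Ṽ(t_{n2} − τ(t_{n2}, U_{n2}))), where Ṽ(t) := U(t) for t ≤ t_n and Ṽ(t) := V(t) for t ∈ [t_n, t_n + h]. -/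
/-!
Since `τ ≥ 0` and `c₂ ≤ 1`, the delayed time `t* = t_{n2} - τ(t_{n2}, U_{n2})` does not depend on
the unknown `V` and lies at or before `t_n + h`. Every solution is therefore determined by the
single vector `Ṽ(t*)`: if `t* ≤ t_n` it is the known history `U(t*)`, and otherwise it is a fixed
point of `w ↦ exp(-θ* h A) u_n + (W₁ - W₂)(θ*) G₁ + W₂(θ*) f(t_{n2}, U_{n2}, w)`. This map is a
contraction because `‖W₂(θ)‖ ≤ C_s h / (2 c₂)`, so Banach's fixed point theorem applies.
-/

open Set NNReal

@[fun_prop]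
theorem continuous_normedSpace_exp {𝔸 : Type*} [NormedRing 𝔸] [NormedAlgebra ℝ 𝔸]
    [CompleteSpace 𝔸] : Continuous (NormedSpace.exp : 𝔸 → 𝔸) :=
  continuous_iff_continuousAt.2 fun x => (NormedSpace.exp_analytic (𝕂 := ℝ) x).continuousAt

section Weights

variable {E : Type*} [NormedAddCommGroup E] [NormedSpace ℝ E] {g : ℝ → E} {C : ℝ}

theorem norm_integral_smul_comp_sub_le {r : ℝ} (hr : 0 ≤ r) (hg : ∀ s ∈ Icc 0 r, ‖g s‖ ≤ C) :
    ‖∫ σ in (0 : ℝ)..r, σ • g (r - σ)‖ ≤ C * (r ^ 2 / 2) := by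
  have hbound : ∀ σ ∈ Ioc 0 r, ‖σ • g (r - σ)‖ ≤ C * σ := fun σ hσ => by
    rw [norm_smul, Real.norm_of_nonneg hσ.1.le, mul_comm]
    exact mul_le_mul_of_nonneg_right (hg _ ⟨by linarith [hσ.2], by linarith [hσ.1]⟩) hσ.1.le
  calc ‖∫ σ in (0 : ℝ)..r, σ • g (r - σ)‖
      ≤ ∫ σ in (0 : ℝ)..r, C * σ :=
        intervalIntegral.norm_integral_le_of_norm_le hr (MeasureTheory.ae_of_all _ hbound)
          ((by fun_prop : Continuous fun σ : ℝ => C * σ).intervalIntegrable 0 r)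
    _ = C * (r ^ 2 / 2) := by rw [intervalIntegral.integral_const_mul, integral_id]; ring

theorem norm_smul_integral_smul_comp_sub_le {h c θ : ℝ} (hh : 0 < h) (hc : 0 < c)
    (hθ : θ ∈ Icc (0 : ℝ) 1) (hg : ∀ s ∈ Icc 0 h, ‖g s‖ ≤ C) :
    ‖(1 / (c * h)) • ∫ σ in (0 : ℝ)..θ * h, σ • g (θ * h - σ)‖ ≤ C * h / (2 * c) := by
  have hθh : 0 ≤ θ * h := mul_nonneg hθ.1 hh.le
  have hθh_le : θ * h ≤ h := mul_le_of_le_one_left hh.le hθ.2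
  have hC : 0 ≤ C := (norm_nonneg _).trans (hg 0 ⟨le_rfl, hh.le⟩)
  have hint := norm_integral_smul_comp_sub_le hθh fun s hs => hg s ⟨hs.1, hs.2.trans hθh_le⟩
  calc ‖(1 / (c * h)) • ∫ σ in (0 : ℝ)..θ * h, σ • g (θ * h - σ)‖
      ≤ 1 / (c * h) * (C * ((θ * h) ^ 2 / 2)) := by
        rw [norm_smul, Real.norm_of_nonneg (by positivity)]
        gcongr
    _ ≤ 1 / (c * h) * (C * (h ^ 2 / 2)) := by gcongr
    _ = C * h / (2 * c) := by field_simp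

end Weights

section DelayedStep

variable {X : Type*} [NormedAddCommGroup X] [NormedSpace ℝ X]

theorem sub_div_mem_Icc_zero_one {a b t : ℝ} (hb : 0 < b) (ht : t ∈ Icc a (a + b)) :
    (t - a) / b ∈ Icc (0 : ℝ) 1 :=
  ⟨div_nonneg (by linarith [ht.1]) hb.le, (div_le_one hb).2 (by linarith [ht.2])⟩

theorem existsUnique_add_apply_comp_eq [CompleteSpace X] (P : X) (B : X →L[ℝ] X) {F : X → X}
    {K : ℝ≥0} (hF : LipschitzWith K F) (hBK : ‖B‖₊ * K < 1) : ∃! w, P + B (F w) = w := by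
  have hΦ : ContractingWith (‖B‖₊ * K) fun w => P + B (F w) :=
    ⟨hBK, LipschitzWith.of_dist_le_mul fun x y => by
      simpa only [dist_add_left, Function.comp_apply] using (B.lipschitz.comp hF).dist_le_mul x y⟩
  have : Nonempty X := ⟨0⟩
  exact ⟨_, hΦ.fixedPoint_isFixedPt, fun w hw => hΦ.fixedPoint_unique hw⟩

def IsDelayedStepSolution (tn h tstar : ℝ) (U E : ℝ → X) (B : ℝ → X →L[ℝ] X) (F : X → X)
    (V : ℝ → X) : Prop :=
  ContinuousOn V (Icc tn (tn + h)) ∧ V tn = U tn ∧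
    ∀ θ ∈ Icc (0 : ℝ) 1,
      V (tn + θ * h) = E θ + B θ (F (if tstar ≤ tn then U tstar else V tstar))

theorem existsUnique_isDelayedStepSolution [CompleteSpace X] {tn h tstar : ℝ} {U E : ℝ → X}
    {B : ℝ → X →L[ℝ] X} {F : X → X} {K : ℝ≥0} (hh : 0 < h) (htstar : tstar ≤ tn + h)
    (hE : Continuous E) (hB : Continuous B) (hE0 : E 0 = U tn) (hB0 : B 0 = 0)
    (hF : LipschitzWith K F) (hBF : ∀ θ ∈ Icc (0 : ℝ) 1, ‖B θ‖₊ * K < 1) :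
    ∃ V, IsDelayedStepSolution tn h tstar U E B F V ∧
      ∀ V', IsDelayedStepSolution tn h tstar U E B F V' → ∀ t ∈ Icc tn (tn + h), V' t = V t := by
  -- `S w` is the step computed with the delayed value `w`.
  set S : X → ℝ → X := fun w t => E ((t - tn) / h) + B ((t - tn) / h) (F w) with hS_def
  have hS : ∀ w θ, S w (tn + θ * h) = E θ + B θ (F w) := fun w θ => by
    simp only [hS_def, add_sub_cancel_left, mul_div_cancel_right₀ θ hh.ne']
  have hS_cont : ∀ w, Continuous (S w) := fun w => by fun_prop
  have hsol_eq : ∀ V, IsDelayedStepSolution tn h tstar U E B F V →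
      ∀ t ∈ Icc tn (tn + h), V t = S (if tstar ≤ tn then U tstar else V tstar) t := by
    rintro V ⟨-, -, hV⟩ t ht
    simpa only [← hS, add_sub_cancel, div_mul_cancel₀ _ hh.ne'] using
      hV _ (sub_div_mem_Icc_zero_one hh ht)
  obtain ⟨w, hw, hw_unique⟩ : ∃! w, (if tstar ≤ tn then U tstar else S w tstar) = w := by
    by_cases hpast : tstar ≤ tn
    · simp only [if_pos hpast, existsUnique_eq']
    · have hθ := sub_div_mem_Icc_zero_one hh ⟨(not_le.1 hpast).le, htstar⟩
      simpa only [if_neg hpast] using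
        existsUnique_add_apply_comp_eq (E ((tstar - tn) / h)) _ hF (hBF _ hθ)
  refine ⟨S w, ⟨(hS_cont w).continuousOn, ?_, fun θ _ => ?_⟩, ?_⟩
  · simpa only [zero_mul, add_zero, hE0, hB0, zero_apply] using hS w 0
  · simp only [hS, hw]
  · intro V' hV' t ht
    have hdelay : (if tstar ≤ tn then U tstar else V' tstar) = w := by
      refine hw_unique _ ?_
      by_cases hpast : tstar ≤ tn
      · simp only [if_pos hpast]
      · have hV'_delay := hsol_eq V' hV' tstar ⟨(not_le.1 hpast).le, htstar⟩
        simp only [if_neg hpast] at hV'_delay ⊢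
        exact hV'_delay.symm
    rw [hsol_eq V' hV' t ht, hdelay]

end DelayedStep

theorem second_order_scheme_unique_solvability_general
    (X : Type*) [NormedAddCommGroup X] [NormedSpace ℝ X] [CompleteSpace X]
    (A : X →L[ℝ] X) (tn h c₂ Lf Cs : ℝ)
    (hh : 0 < h) (hc₂ : c₂ ∈ Set.Ioc (0:ℝ) 1)
    (hCs : Cs = sSup ((fun σ : ℝ => ‖NormedSpace.exp (-(σ • A))‖) '' Set.Icc 0 h))
    (f : ℝ → X → X → X) (τ : ℝ → X → ℝ) (U : ℝ → X)
    (hf : ∀ (t₁ t₂ : ℝ) (v₁ v₂ w₁ w₂ : X),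
      ‖f t₁ v₁ w₁ - f t₂ v₂ w₂‖ ≤ Lf * (|t₁ - t₂| + ‖v₁ - v₂‖ + ‖w₁ - w₂‖))
    (hτ_nonneg : ∀ (t : ℝ) (v : X), 0 ≤ τ t v)
    (G₁ : X) (Un2 : X)
    (W₁ W₂ : ℝ → X →L[ℝ] X)
    (hW₁ : ∀ θ : ℝ, W₁ θ = ∫ σ in (0:ℝ)..(θ * h),
      NormedSpace.exp (-((θ * h - σ) • A)))
    (hW₂ : ∀ θ : ℝ, W₂ θ = (1 / (c₂ * h)) • ∫ σ in (0:ℝ)..(θ * h),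
      σ • NormedSpace.exp (-((θ * h - σ) • A)))
    (hsmall : Lf * Cs * h < 2 * c₂) :
    ∃ V : ℝ → X,
      (ContinuousOn V (Set.Icc tn (tn + h)) ∧ V tn = U tn ∧
        ∀ θ ∈ Set.Icc (0:ℝ) 1,
          V (tn + θ * h) =
            (NormedSpace.exp (-((θ * h) • A))) (U tn) + (W₁ θ - W₂ θ) G₁ +
              (W₂ θ) (f (tn + c₂ * h) Un2
                ((fun t : ℝ => if t ≤ tn then U t else V t)
                  ((tn + c₂ * h) - τ (tn + c₂ * h) Un2)))) ∧
      ∀ V' : ℝ → X,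
        (ContinuousOn V' (Set.Icc tn (tn + h)) ∧ V' tn = U tn ∧
          ∀ θ ∈ Set.Icc (0:ℝ) 1,
            V' (tn + θ * h) =
              (NormedSpace.exp (-((θ * h) • A))) (U tn) + (W₁ θ - W₂ θ) G₁ +
                (W₂ θ) (f (tn + c₂ * h) Un2
                  ((fun t : ℝ => if t ≤ tn then U t else V' t)
                    ((tn + c₂ * h) - τ (tn + c₂ * h) Un2)))) →
        ∀ t ∈ Set.Icc tn (tn + h), V' t = V t := by
  obtain ⟨hc₂0, hc₂1⟩ := hc₂
  have hexp_le : ∀ s ∈ Icc 0 h, ‖NormedSpace.exp (-(s • A))‖ ≤ Cs := fun s hs =>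
    hCs ▸ le_csSup (isCompact_Icc.image (by fun_prop)).bddAbove (mem_image_of_mem _ hs)
  have hF : LipschitzWith Lf.toNNReal (f (tn + c₂ * h) Un2) :=
    LipschitzWith.of_dist_le' fun w₁ w₂ => by
      simpa [dist_eq_norm] using hf (tn + c₂ * h) (tn + c₂ * h) Un2 Un2 w₁ w₂
  have hcontract : max Lf 0 * (Cs * h / (2 * c₂)) < 1 := by
    rw [mul_div_assoc', div_lt_one (by positivity)]
    rcases le_total 0 Lf with hLf | hLf
    · rw [max_eq_left hLf]; linarith
    · rw [max_eq_right hLf]; linarith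
  refine existsUnique_isDelayedStepSolution
    (E := fun θ => NormedSpace.exp (-((θ * h) • A)) (U tn) + (W₁ θ - W₂ θ) G₁) (B := W₂)
    hh ?_ ?_ ?_ ?_ ?_ hF fun θ hθ => ?_
  · linarith [hτ_nonneg (tn + c₂ * h) Un2, mul_le_of_le_one_left hh.le hc₂1]
  · rw [funext hW₁, funext hW₂]; fun_prop
  · rw [funext hW₂]; fun_prop
  · simp [hW₁, hW₂]
  · simp [hW₂]
  · have hW₂_le : ‖W₂ θ‖ ≤ Cs * h / (2 * c₂) :=
      hW₂ θ ▸ norm_smul_integral_smul_comp_sub_le hh hc₂0 hθ hexp_le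
    rw [← NNReal.coe_lt_coe, NNReal.coe_mul, coe_nnnorm, Real.coe_toNNReal', NNReal.coe_one]
    calc ‖W₂ θ‖ * max Lf 0 ≤ Cs * h / (2 * c₂) * max Lf 0 := by gcongr
      _ < 1 := by linarith

/-- Unique solvability of (the continuous extension of) one step of the second
order exponential Runge–Kutta method for the state-dependent delay problem when
overlapping occurs: if `L_f C_s h < 2 c₂`, there is a unique continuous function
`V` on `[t_n, t_n + h]` with `V(t_n) = u_n` satisfying the implicit scheme. -/
theorem second_order_scheme_unique_solvability
    (X : Type*) [NormedAddCommGroup X] [NormedSpace ℝ X] [CompleteSpace X]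
    (A : X →L[ℝ] X) (tn h c₂ Lf Lτ Cs : ℝ)
    (hh : 0 < h) (hc₂ : c₂ ∈ Set.Ioc (0:ℝ) 1)
    (hCs : Cs = sSup ((fun σ : ℝ => ‖NormedSpace.exp (-(σ • A))‖) '' Set.Icc 0 h))
    (f : ℝ → X → X → X) (τ : ℝ → X → ℝ) (U : ℝ → X)
    (hf : ∀ (t₁ t₂ : ℝ) (v₁ v₂ w₁ w₂ : X),
      ‖f t₁ v₁ w₁ - f t₂ v₂ w₂‖ ≤ Lf * (|t₁ - t₂| + ‖v₁ - v₂‖ + ‖w₁ - w₂‖))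
    (hτ_nonneg : ∀ (t : ℝ) (v : X), 0 ≤ τ t v)
    (hτ : ∀ (t₁ t₂ : ℝ) (v₁ v₂ : X),
      |τ t₁ v₁ - τ t₂ v₂| ≤ Lτ * (|t₁ - t₂| + ‖v₁ - v₂‖))
    (hU_cont : ContinuousOn U (Set.Iic tn))
    (G₁ : X) (hG₁ : G₁ = f tn (U tn) (U (tn - τ tn (U tn))))
    (Un2 : X) (hUn2 : Un2 = (NormedSpace.exp (-((c₂ * h) • A))) (U tn) +
      (∫ σ in (0:ℝ)..(c₂ * h), NormedSpace.exp (-((c₂ * h - σ) • A))) G₁)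
    (W₁ W₂ : ℝ → X →L[ℝ] X)
    (hW₁ : ∀ θ : ℝ, W₁ θ = ∫ σ in (0:ℝ)..(θ * h),
      NormedSpace.exp (-((θ * h - σ) • A)))
    (hW₂ : ∀ θ : ℝ, W₂ θ = (1 / (c₂ * h)) • ∫ σ in (0:ℝ)..(θ * h),
      σ • NormedSpace.exp (-((θ * h - σ) • A)))
    (hsmall : Lf * Cs * h < 2 * c₂) :
    ∃ V : ℝ → X,
      (ContinuousOn V (Set.Icc tn (tn + h)) ∧ V tn = U tn ∧
        ∀ θ ∈ Set.Icc (0:ℝ) 1,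
          V (tn + θ * h) =
            (NormedSpace.exp (-((θ * h) • A))) (U tn) + (W₁ θ - W₂ θ) G₁ +
              (W₂ θ) (f (tn + c₂ * h) Un2
                ((fun t : ℝ => if t ≤ tn then U t else V t)
                  ((tn + c₂ * h) - τ (tn + c₂ * h) Un2)))) ∧
      ∀ V' : ℝ → X,
        (ContinuousOn V' (Set.Icc tn (tn + h)) ∧ V' tn = U tn ∧
          ∀ θ ∈ Set.Icc (0:ℝ) 1,
            V' (tn + θ * h) =
              (NormedSpace.exp (-((θ * h) • A))) (U tn) + (W₁ θ - W₂ θ) G₁ +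
                (W₂ θ) (f (tn + c₂ * h) Un2
                  ((fun t : ℝ => if t ≤ tn then U t else V' t)
                    ((tn + c₂ * h) - τ (tn + c₂ * h) Un2)))) →
        ∀ t ∈ Set.Icc tn (tn + h), V' t = V t :=
  second_order_scheme_unique_solvability_general X A tn h c₂ Lf Cs hh hc₂ hCs f τ U hf hτ_nonneg G₁
    Un2 W₁ W₂ hW₁ hW₂ hsmall
end

section
/- Let X be a real Banach space, A : X → X a bounded linear operator, t_n ∈ ℝ, h₀ > 0, c₂ ∈ (0, 1]. Suppose f : ℝ × X × X → X satisfies ‖f(t₁,v₁,w₁) − f(t₂,v₂,w₂)‖ ≤ L_f·(|t₁ − t₂| + ‖v₁ − v₂‖ + ‖w₁ − w₂‖) for all arguments; τ : ℝ × X → ℝ is nonnegative and satisfies |τ(t₁,v₁) − τ(t₂,v₂)| ≤ L_τ·(|t₁ − t₂| + ‖v₁ − v₂‖) for all arguments; and u : (−∞, t_n + h₀] → X is Lipschitz continuous with constant L_u. Define g(t) := f(t, u(t), u(t − τ(t, u(t)))) and assume g is continuously differentiable on [t_n, t_n + h₀] with ‖g′(a) − g′(b)‖ ≤ M·|a − b|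 there, and that u(t_n + δ) = exp(−δ A) u(t_n) + ∫₀^{δ} exp(−(δ − σ) A) g(t_n + σ) dσ for all δ ∈ [0, h₀]. Then there exists a constant C > 0, independent of h, such that for every h ∈ (0, h₀] the following hold, where t_{n2} := t_n + c₂ h, W₁(θ) := ∫₀^{θh} exp(−(θh − σ) A) dσ, W₂(θ) := (1/(c₂ h))·∫₀^{θh} exp(−(θh − σ) A)·σ dσ, Û_{n2} := exp(−c₂ h A) u(t_n) + (∫₀^{c₂h} exp(−(c₂h − σ) A) dσ)·g(t_n), and Û(t_n + θ h) := exp(−θ h A) u(t_n) + (W₁(θ) − W₂(θ))·g(t_n) + W₂(θ)·f(t_{n2}, Û_{n2}, u(t_{n2} − τ(t_{n2}, Û_{n2}))) for θ ∈ [0, 1]: (i) ‖Û_{n2} − u(t_{n2})‖ ≤ C·h², and (ii) max_{θ ∈ [0,1]} ‖Û(t_n + θ h) − u(t_n + θ h)‖ ≤ C·h³. -/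
open MeasureTheory intervalIntegral
open scoped Nat

section aux

variable {X : Type*} [NormedAddCommGroup X] [NormedSpace ℝ X] [CompleteSpace X]

lemma norm_exp_clm_le (B : X →L[ℝ] X) : ‖NormedSpace.exp B‖ ≤ Real.exp ‖B‖ := by
  rw [NormedSpace.exp_eq_tsum (𝕂 := ℝ)]
  have hsum := NormedSpace.norm_expSeries_summable' (𝕂 := ℝ) B
  refine (norm_tsum_le_tsum_norm hsum).trans ?_
  have h2 : Real.exp ‖B‖ = ∑' n : ℕ, ‖B‖ ^ n / n ! := by
    rw [Real.exp_eq_exp_ℝ, NormedSpace.exp_eq_tsum_div]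
  rw [h2]
  refine Summable.tsum_le_tsum ?_ hsum (Real.summable_pow_div_factorial ‖B‖)
  intro n
  have hB : ‖B ^ n‖ ≤ ‖B‖ ^ n := by
    cases n with
    | zero => rw [pow_zero, pow_zero]; exact ContinuousLinearMap.norm_id_le
    | succ m => exact norm_pow_le' B m.succ_pos
  rw [norm_smul]
  rw [Real.norm_eq_abs, abs_of_nonneg (by positivity), div_eq_inv_mul]
  exact mul_le_mul_of_nonneg_left hB (by positivity)

lemma norm_exp_smul_le (A : X →L[ℝ] X) {s b : ℝ} (hs : |s| ≤ b) :
    ‖NormedSpace.exp (-(s • A))‖ ≤ Real.exp (b * ‖A‖) := by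
  refine (norm_exp_clm_le _).trans (Real.exp_le_exp.2 ?_)
  rw [norm_neg]
  refine le_trans (norm_smul_le s A) ?_
  rw [Real.norm_eq_abs]
  exact mul_le_mul_of_nonneg_right hs (norm_nonneg A)

lemma exp_comp_continuous (A : X →L[ℝ] X) (J : ℝ) :
    Continuous fun σ : ℝ => NormedSpace.exp (-((J - σ) • A)) :=
  (show Continuous (NormedSpace.exp : (X →L[ℝ] X) → (X →L[ℝ] X)) from by
    have hc : Continuous (NormedSpace.exp : (X →L[ℝ] X) → (X →L[ℝ] X)) := by
      rw [← continuousOn_univ, ← Metric.eball_top_eq_univ (0 : X →L[ℝ] X),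
        ← NormedSpace.expSeries_radius_eq_top ℝ (X →L[ℝ] X)]
      exact NormedSpace.continuousOn_exp (𝕂 := ℝ)
    exact hc).comp
    (((continuous_const.sub continuous_id).smul continuous_const).neg)

end aux

set_option maxHeartbeats 2000000 in
/-- Local error bounds of (the continuous extension of) one step of the second
order exponential Runge–Kutta method applied with exact initial and delayed
values: there is `C > 0`, independent of `h ∈ (0, h₀]`, such that the internal
stage error is `O(h²)` and the continuous-extension error is `O(h³)`. -/
theorem second_order_local_error
    (X : Type*) [NormedAddCommGroup X] [NormedSpace ℝ X] [CompleteSpace X]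
    (A : X →L[ℝ] X) (tn h₀ c₂ Lf Lτ Lu M : ℝ)
    (hh₀ : 0 < h₀) (hc₂ : c₂ ∈ Set.Ioc (0:ℝ) 1)
    (hLf : 0 ≤ Lf) (hLτ : 0 ≤ Lτ) (hLu : 0 ≤ Lu) (hM : 0 ≤ M)
    (f : ℝ → X → X → X) (τ : ℝ → X → ℝ) (u g g' : ℝ → X)
    (hf : ∀ (t₁ t₂ : ℝ) (v₁ v₂ w₁ w₂ : X),
      ‖f t₁ v₁ w₁ - f t₂ v₂ w₂‖ ≤ Lf * (|t₁ - t₂| + ‖v₁ - v₂‖ + ‖w₁ - w₂‖))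
    (hτ_nonneg : ∀ (t : ℝ) (v : X), 0 ≤ τ t v)
    (hτ : ∀ (t₁ t₂ : ℝ) (v₁ v₂ : X),
      |τ t₁ v₁ - τ t₂ v₂| ≤ Lτ * (|t₁ - t₂| + ‖v₁ - v₂‖))
    (hu_lip : ∀ a b : ℝ, a ≤ tn + h₀ → b ≤ tn + h₀ → ‖u a - u b‖ ≤ Lu * |a - b|)
    (hg_def : ∀ t : ℝ, g t = f t (u t) (u (t - τ t (u t))))
    (hg_deriv : ∀ t ∈ Set.Icc tn (tn + h₀),
      HasDerivWithinAt g (g' t) (Set.Icc tn (tn + h₀)) t)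
    (hg'_cont : ContinuousOn g' (Set.Icc tn (tn + h₀)))
    (hg'_lip : ∀ a b : ℝ, a ∈ Set.Icc tn (tn + h₀) → b ∈ Set.Icc tn (tn + h₀) →
      ‖g' a - g' b‖ ≤ M * |a - b|)
    (hu_mild : ∀ δ ∈ Set.Icc (0:ℝ) h₀,
      u (tn + δ) = (NormedSpace.exp (-(δ • A))) (u tn) +
        ∫ σ in (0:ℝ)..δ, (NormedSpace.exp (-((δ - σ) • A))) (g (tn + σ))) :
    ∃ C > (0:ℝ), ∀ h : ℝ, 0 < h → h ≤ h₀ →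
      ∀ Un2hat : X,
        Un2hat = (NormedSpace.exp (-((c₂ * h) • A))) (u tn) +
          (∫ σ in (0:ℝ)..(c₂ * h), NormedSpace.exp (-((c₂ * h - σ) • A))) (g tn) →
        ∀ W₁ W₂ : ℝ → X →L[ℝ] X,
          (∀ θ : ℝ, W₁ θ = ∫ σ in (0:ℝ)..(θ * h),
            NormedSpace.exp (-((θ * h - σ) • A))) →
          (∀ θ : ℝ, W₂ θ = (1 / (c₂ * h)) • ∫ σ in (0:ℝ)..(θ * h),
            σ • NormedSpace.exp (-((θ * h - σ) • A))) →
          ‖Un2hat - u (tn + c₂ * h)‖ ≤ C * h ^ 2 ∧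
          ∀ θ ∈ Set.Icc (0:ℝ) 1,
            ‖((NormedSpace.exp (-((θ * h) • A))) (u tn) +
                (W₁ θ - W₂ θ) (g tn) +
                (W₂ θ) (f (tn + c₂ * h) Un2hat
                  (u ((tn + c₂ * h) - τ (tn + c₂ * h) Un2hat)))) -
              u (tn + θ * h)‖ ≤ C * h ^ 3 := by
  obtain ⟨hc0, hc1⟩ := hc₂
  set E := Real.exp (h₀ * ‖A‖) with hEdef
  have hE0 : 0 < E := Real.exp_pos _
  set G := ‖g' tn‖ + M * h₀ with hGdef
  have hG0 : 0 ≤ G := by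
    rw [hGdef]; exact add_nonneg (norm_nonneg _) (mul_nonneg hM hh₀.le)
  clear_value E G
  have htn_mem : tn ∈ Set.Icc tn (tn + h₀) := ⟨le_refl _, by linarith⟩
  -- bound on g'
  have hg'bound : ∀ t ∈ Set.Icc tn (tn + h₀), ‖g' t‖ ≤ G := by
    intro t ht
    have h2 : ‖g' t - g' tn‖ ≤ M * |t - tn| := hg'_lip t tn ht htn_mem
    have h3 : |t - tn| ≤ h₀ := by
      rw [abs_of_nonneg (by linarith [ht.1])]; linarith [ht.2]
    have h4 := norm_sub_norm_le (g' t) (g' tn)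
    have h5 := mul_le_mul_of_nonneg_left h3 hM
    rw [hGdef]; linarith
  -- Lipschitz bound on g
  have hgLip : ∀ a ∈ Set.Icc tn (tn + h₀), ∀ b ∈ Set.Icc tn (tn + h₀),
      ‖g a - g b‖ ≤ G * |a - b| := by
    intro a ha b hb
    have := (convex_Icc tn (tn + h₀)).norm_image_sub_le_of_norm_hasDerivWithin_le
      hg_deriv hg'bound hb ha
    simpa [Real.norm_eq_abs] using this
  -- Taylor bound
  have hTaylor : ∀ s : ℝ, 0 ≤ s → s ≤ h₀ →
      ‖g (tn + s) - g tn - s • g' tn‖ ≤ M * s ^ 2 := by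
    intro s hs0 hs1
    have hsub : Set.Icc tn (tn + s) ⊆ Set.Icc tn (tn + h₀) :=
      Set.Icc_subset_Icc le_rfl (by linarith)
    have hφd : ∀ t ∈ Set.Icc tn (tn + s),
        HasDerivWithinAt (fun t => g t - (t - tn) • g' tn) (g' t - g' tn)
          (Set.Icc tn (tn + s)) t := by
      intro t ht
      have h1 : HasDerivWithinAt g (g' t) (Set.Icc tn (tn + s)) t :=
        (hg_deriv t (hsub ht)).mono hsub
      have h2 : HasDerivWithinAt (fun t : ℝ => (t - tn) • g' tn) ((1:ℝ) • g' tn)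
          (Set.Icc tn (tn + s)) t :=
        ((hasDerivWithinAt_id t _).sub_const tn).smul_const (g' tn)
      have h3 := h1.sub h2; rw [one_smul] at h3; exact h3
    have hbd : ∀ t ∈ Set.Icc tn (tn + s), ‖g' t - g' tn‖ ≤ M * s := by
      intro t ht
      refine (hg'_lip t tn (hsub ht) htn_mem).trans ?_
      have h3 : |t - tn| ≤ s := by
        rw [abs_of_nonneg (by linarith [ht.1])]; linarith [ht.2]
      exact mul_le_mul_of_nonneg_left h3 hM
    have key := (convex_Icc tn (tn + s)).norm_image_sub_le_of_norm_hasDerivWithin_le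
      hφd hbd (Set.left_mem_Icc.2 (by linarith)) (Set.right_mem_Icc.2 (by linarith))
    have heq : (fun t => g t - (t - tn) • g' tn) (tn + s)
        - (fun t => g t - (t - tn) • g' tn) tn
        = g (tn + s) - g tn - s • g' tn := by
      simp only [add_sub_cancel_left, sub_self, zero_smul, sub_zero]
      abel
    rw [heq] at key
    have hnorm : ‖tn + s - tn‖ = s := by
      rw [Real.norm_eq_abs, add_sub_cancel_left, abs_of_nonneg hs0]
    rw [hnorm] at key
    nlinarith [key]
  have hg_cont : ContinuousOn g (Set.Icc tn (tn + h₀)) :=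
    fun t ht => (hg_deriv t ht).continuousWithinAt
  have hgc' : ContinuousOn (fun σ => g (tn + σ)) (Set.Icc 0 h₀) := by
    have hmaps : Set.MapsTo (fun σ : ℝ => tn + σ) (Set.Icc 0 h₀) (Set.Icc tn (tn + h₀)) := by
      intro σ hσ
      simp only [Set.mem_Icc]
      exact ⟨by linarith [hσ.1], by linarith [hσ.2]⟩
    exact hg_cont.comp ((continuous_const.add continuous_id).continuousOn) hmaps
  set K₂ := Lf * (1 + Lu * Lτ) * (E * G) + M with hK₂def
  clear_value K₂
  have hLuLτ : (0:ℝ) ≤ 1 + Lu * Lτ := by nlinarith [mul_nonneg hLu hLτ]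
  have hK₂0 : 0 ≤ K₂ := by
    rw [hK₂def]
    exact add_nonneg (mul_nonneg (mul_nonneg hLf hLuLτ) (mul_nonneg hE0.le hG0)) hM
  have hEG : 0 ≤ E * G := mul_nonneg hE0.le hG0
  have hEM : 0 ≤ E * M := mul_nonneg hE0.le hM
  have hEK : 0 ≤ E * K₂ / c₂ := div_nonneg (mul_nonneg hE0.le hK₂0) hc0.le
  refine ⟨E * G + E * M + E * K₂ / c₂ + 1, by linarith, ?_⟩
  intro h hh0 hhh₀ Un2hat hUdef W₁ W₂ hW₁def hW₂def
  have hch0 : 0 < c₂ * h := mul_pos hc0 hh0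
  have hchh : c₂ * h ≤ h := by nlinarith [mul_le_mul_of_nonneg_right hc1 hh0.le]
  have hchh₀ : c₂ * h ≤ h₀ := hchh.trans hhh₀
  -- generic integrability facts
  have iexp : ∀ J : ℝ, IntervalIntegrable
      (fun σ => NormedSpace.exp (-((J - σ) • A))) volume 0 J :=
    fun J => (exp_comp_continuous A J).intervalIntegrable 0 J
  have iexpx : ∀ (J : ℝ) (x : X), IntervalIntegrable
      (fun σ => (NormedSpace.exp (-((J - σ) • A))) x) volume 0 J :=
    fun J x => ((exp_comp_continuous A J).clm_apply continuous_const).intervalIntegrable 0 J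
  have ismulexp : ∀ J : ℝ, IntervalIntegrable
      (fun σ => σ • NormedSpace.exp (-((J - σ) • A))) volume 0 J :=
    fun J => (continuous_id.smul (exp_comp_continuous A J)).intervalIntegrable 0 J
  have ismulx : ∀ (J : ℝ) (x : X), IntervalIntegrable
      (fun σ => σ • (NormedSpace.exp (-((J - σ) • A))) x) volume 0 J :=
    fun J x => (continuous_id.smul
      ((exp_comp_continuous A J).clm_apply continuous_const)).intervalIntegrable 0 J
  have ig : ∀ J : ℝ, 0 ≤ J → J ≤ h₀ → IntervalIntegrable
      (fun σ => (NormedSpace.exp (-((J - σ) • A))) (g (tn + σ))) volume 0 J := by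
    intro J hJ0 hJh₀
    apply ContinuousOn.intervalIntegrable
    rw [Set.uIcc_of_le hJ0]
    exact ((exp_comp_continuous A J).continuousOn).clm_apply
      (hgc'.mono (Set.Icc_subset_Icc le_rfl hJh₀))
  -- operator norm bound for the exponentials
  have hopbd : ∀ J σ : ℝ, 0 ≤ σ → σ ≤ J → J ≤ h₀ →
      ‖NormedSpace.exp (-((J - σ) • A))‖ ≤ E := by
    intro J σ h1 h2 h3
    rw [hEdef]
    exact norm_exp_smul_le A (by rw [abs_of_nonneg (by linarith)]; linarith)
  -- Part (i)
  have stage : ‖Un2hat - u (tn + c₂ * h)‖ ≤ E * G * h ^ 2 := by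
    rw [hUdef, hu_mild (c₂ * h) ⟨hch0.le, hchh₀⟩,
      ContinuousLinearMap.intervalIntegral_apply (iexp (c₂ * h)) (g tn)]
    have heq : (NormedSpace.exp (-((c₂ * h) • A))) (u tn) +
        (∫ σ in (0:ℝ)..(c₂ * h), (NormedSpace.exp (-((c₂ * h - σ) • A))) (g tn)) -
        ((NormedSpace.exp (-((c₂ * h) • A))) (u tn) +
        ∫ σ in (0:ℝ)..(c₂ * h), (NormedSpace.exp (-((c₂ * h - σ) • A))) (g (tn + σ))) =
        ∫ σ in (0:ℝ)..(c₂ * h), (NormedSpace.exp (-((c₂ * h - σ) • A)))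
          (g tn - g (tn + σ)) := by
      rw [add_sub_add_left_eq_sub,
        ← intervalIntegral.integral_sub (iexpx (c₂ * h) (g tn)) (ig (c₂ * h) hch0.le hchh₀)]
      simp only [map_sub]
    rw [heq]
    have hbd := intervalIntegral.norm_integral_le_of_norm_le_const
      (C := E * (G * h))
      (f := fun σ => (NormedSpace.exp (-((c₂ * h - σ) • A))) (g tn - g (tn + σ)))
      (a := 0) (b := c₂ * h) ?_
    · refine hbd.trans ?_
      rw [sub_zero, abs_of_nonneg hch0.le]
      refine le_trans (mul_le_mul_of_nonneg_left hchh
        (mul_nonneg hE0.le (mul_nonneg hG0 hh0.le))) (le_of_eq (by ring))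
    · intro σ hσ
      rw [Set.uIoc_of_le hch0.le] at hσ
      obtain ⟨hσ0, hσ1⟩ := hσ
      have hmem : tn + σ ∈ Set.Icc tn (tn + h₀) := ⟨by linarith, by linarith⟩
      have hgb : ‖g tn - g (tn + σ)‖ ≤ G * h := by
        refine (hgLip tn htn_mem (tn + σ) hmem).trans ?_
        have habs : |tn - (tn + σ)| = σ := by
          rw [abs_sub_comm, add_sub_cancel_left, abs_of_nonneg hσ0.le]
        rw [habs]
        exact mul_le_mul_of_nonneg_left (by linarith) hG0
      calc ‖(NormedSpace.exp (-((c₂ * h - σ) • A))) (g tn - g (tn + σ))‖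
          ≤ ‖NormedSpace.exp (-((c₂ * h - σ) • A))‖ * ‖g tn - g (tn + σ)‖ :=
            ContinuousLinearMap.le_opNorm _ _
        _ ≤ E * (G * h) := mul_le_mul (hopbd _ _ hσ0.le hσ1 hchh₀) hgb (norm_nonneg _) hE0.le
  constructor
  · refine stage.trans ?_
    have hD : 0 ≤ (E * M + E * K₂ / c₂ + 1) := by linarith
    nlinarith [mul_nonneg hD (sq_nonneg h)]
  -- Part (ii)
  intro θ hθ
  obtain ⟨hθ0, hθ1⟩ := hθ
  have hW1θ := hW₁def θ
  have hW2θ := hW₂def θ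
  set J := θ * h with hJdef
  have hJ0 : 0 ≤ J := mul_nonneg hθ0 hh0.le
  have hJh : J ≤ h := by
    rw [hJdef]; nlinarith [mul_le_mul_of_nonneg_right hθ1 hh0.le]
  have hJh₀ : J ≤ h₀ := hJh.trans hhh₀
  set t₂ := tn + c₂ * h with ht₂def
  have ht₂mem : t₂ ∈ Set.Icc tn (tn + h₀) :=
    ⟨by rw [ht₂def]; linarith, by rw [ht₂def]; linarith⟩
  set F := f t₂ Un2hat (u (t₂ - τ t₂ Un2hat)) with hFdef
  set R := F - g tn - (c₂ * h) • g' tn with hRdef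
  clear_value J t₂ F R
  -- bound on R
  have hsn : ‖Un2hat - u t₂‖ ≤ E * G * h ^ 2 := stage
  have hRbound : ‖R‖ ≤ K₂ * h ^ 2 := by
    have hFg : ‖F - g t₂‖ ≤ Lf * (1 + Lu * Lτ) * (E * G) * h ^ 2 := by
      rw [hFdef, hg_def t₂]
      refine (hf t₂ t₂ Un2hat (u t₂) (u (t₂ - τ t₂ Un2hat)) (u (t₂ - τ t₂ (u t₂)))).trans ?_
      have hτb : |τ t₂ Un2hat - τ t₂ (u t₂)| ≤ Lτ * ‖Un2hat - u t₂‖ := by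
        refine (hτ t₂ t₂ Un2hat (u t₂)).trans ?_
        simp
      have huu : ‖u (t₂ - τ t₂ Un2hat) - u (t₂ - τ t₂ (u t₂))‖ ≤
          Lu * (Lτ * ‖Un2hat - u t₂‖) := by
        refine (hu_lip _ _ (by linarith [hτ_nonneg t₂ Un2hat, ht₂mem.2])
          (by linarith [hτ_nonneg t₂ (u t₂), ht₂mem.2])).trans ?_
        have harg : t₂ - τ t₂ Un2hat - (t₂ - τ t₂ (u t₂))
            = -(τ t₂ Un2hat - τ t₂ (u t₂)) := by ring
        rw [harg, abs_neg]
        exact mul_le_mul_of_nonneg_left hτb hLu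
      have h0 : |t₂ - t₂| = 0 := by simp
      rw [h0]
      have hb1 : ‖u (t₂ - τ t₂ Un2hat) - u (t₂ - τ t₂ (u t₂))‖ ≤ Lu * Lτ * (E * G * h ^ 2) := by
        refine huu.trans ?_
        nlinarith [mul_le_mul_of_nonneg_left hsn (mul_nonneg hLu hLτ)]
      nlinarith [mul_le_mul_of_nonneg_left (add_le_add hsn hb1) hLf]
    have hTay₂ : ‖g t₂ - g tn - (c₂ * h) • g' tn‖ ≤ M * h ^ 2 := by
      have hT := hTaylor (c₂ * h) hch0.le hchh₀
      rw [ht₂def]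
      refine hT.trans ?_
      have hcsq : (c₂ * h) ^ 2 ≤ h ^ 2 := by
        nlinarith [mul_nonneg (show (0:ℝ) ≤ 1 - c₂ ^ 2 by nlinarith) (sq_nonneg h)]
      exact mul_le_mul_of_nonneg_left hcsq hM
    have hsplit : R = (F - g t₂) + (g t₂ - g tn - (c₂ * h) • g' tn) := by
      rw [hRdef]; abel
    rw [hsplit]
    refine (norm_add_le _ _).trans ?_
    rw [hK₂def]; nlinarith [hFg, hTay₂]
  -- apply formulas for W₁ and W₂
  have hW1ap : (W₁ θ) (g tn) =
      ∫ σ in (0:ℝ)..J, (NormedSpace.exp (-((J - σ) • A))) (g tn) := by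
    rw [hW1θ]; exact ContinuousLinearMap.intervalIntegral_apply (iexp J) (g tn)
  have hW2ap : ∀ x : X, (W₂ θ) x =
      (1 / (c₂ * h)) • ∫ σ in (0:ℝ)..J, σ • (NormedSpace.exp (-((J - σ) • A))) x := by
    intro x
    rw [hW2θ, ContinuousLinearMap.smul_apply,
      ContinuousLinearMap.intervalIntegral_apply (ismulexp J) x]
    simp only [ContinuousLinearMap.smul_apply]
  -- the key algebraic identity
  have main_eq :
      (NormedSpace.exp (-(J • A))) (u tn) + (W₁ θ - W₂ θ) (g tn) + (W₂ θ) F - u (tn + J) =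
        (∫ σ in (0:ℝ)..J, (NormedSpace.exp (-((J - σ) • A)))
            (g tn + σ • g' tn - g (tn + σ))) +
        (1 / (c₂ * h)) • ∫ σ in (0:ℝ)..J, σ • (NormedSpace.exp (-((J - σ) • A))) R := by
    rw [hu_mild J ⟨hJ0, hJh₀⟩, ContinuousLinearMap.sub_apply, hW1ap, hW2ap (g tn), hW2ap F]
    have h1 : (∫ σ in (0:ℝ)..J, (NormedSpace.exp (-((J - σ) • A)))
        (g tn + σ • g' tn - g (tn + σ))) =
        ((∫ σ in (0:ℝ)..J, (NormedSpace.exp (-((J - σ) • A))) (g tn)) +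
         ∫ σ in (0:ℝ)..J, σ • (NormedSpace.exp (-((J - σ) • A))) (g' tn)) -
        ∫ σ in (0:ℝ)..J, (NormedSpace.exp (-((J - σ) • A))) (g (tn + σ)) := by
      rw [← intervalIntegral.integral_add (iexpx J (g tn)) (ismulx J (g' tn)),
        ← intervalIntegral.integral_sub ((iexpx J (g tn)).add (ismulx J (g' tn)))
          (ig J hJ0 hJh₀)]
      congr 1; funext σ
      simp [map_add, map_sub, _root_.map_smul]
    have h2 : (∫ σ in (0:ℝ)..J, σ • (NormedSpace.exp (-((J - σ) • A))) R) =
        ((∫ σ in (0:ℝ)..J, σ • (NormedSpace.exp (-((J - σ) • A))) F) -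
         ∫ σ in (0:ℝ)..J, σ • (NormedSpace.exp (-((J - σ) • A))) (g tn)) -
        (c₂ * h) • ∫ σ in (0:ℝ)..J, σ • (NormedSpace.exp (-((J - σ) • A))) (g' tn) := by
      have i5 : IntervalIntegrable
          (fun σ : ℝ => (c₂ * h) • (σ • (NormedSpace.exp (-((J - σ) • A))) (g' tn)))
          volume 0 J := (ismulx J (g' tn)).smul (c₂ * h)
      calc (∫ σ in (0:ℝ)..J, σ • (NormedSpace.exp (-((J - σ) • A))) R)
          = ∫ σ in (0:ℝ)..J,
              ((σ • (NormedSpace.exp (-((J - σ) • A))) F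
                - σ • (NormedSpace.exp (-((J - σ) • A))) (g tn))
                - (c₂ * h) • (σ • (NormedSpace.exp (-((J - σ) • A))) (g' tn))) := by
            congr 1; funext σ
            rw [hRdef]
            simp only [map_sub, _root_.map_smul, smul_sub]
            rw [smul_comm σ (c₂ * h)]
        _ = _ := by
            rw [intervalIntegral.integral_sub ((ismulx J F).sub (ismulx J (g tn))) i5,
              intervalIntegral.integral_sub (ismulx J F) (ismulx J (g tn)),
              intervalIntegral.integral_smul]
    rw [h1, h2]
    have hcne : (c₂ * h) ≠ 0 := hch0.ne'
    match_scalars <;> field_simp <;> ring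
  rw [main_eq]
  -- bound the two pieces
  have B1 : ‖∫ σ in (0:ℝ)..J, (NormedSpace.exp (-((J - σ) • A)))
      (g tn + σ • g' tn - g (tn + σ))‖ ≤ E * M * h ^ 3 := by
    have hbd := intervalIntegral.norm_integral_le_of_norm_le_const
      (C := E * (M * h ^ 2))
      (f := fun σ => (NormedSpace.exp (-((J - σ) • A))) (g tn + σ • g' tn - g (tn + σ)))
      (a := 0) (b := J) ?_
    · refine hbd.trans ?_
      rw [sub_zero, abs_of_nonneg hJ0]
      refine le_trans (mul_le_mul_of_nonneg_left hJh
        (mul_nonneg hE0.le (mul_nonneg hM (sq_nonneg h)))) (le_of_eq (by ring))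
    · intro σ hσ
      rw [Set.uIoc_of_le hJ0] at hσ
      obtain ⟨hσ0, hσ1⟩ := hσ
      have hvb : ‖g tn + σ • g' tn - g (tn + σ)‖ ≤ M * h ^ 2 := by
        have heq2 : g tn + σ • g' tn - g (tn + σ) = -(g (tn + σ) - g tn - σ • g' tn) := by abel
        rw [heq2, norm_neg]
        refine (hTaylor σ hσ0.le (by linarith)).trans ?_
        have : σ ^ 2 ≤ h ^ 2 := by nlinarith
        exact mul_le_mul_of_nonneg_left this hM
      calc ‖(NormedSpace.exp (-((J - σ) • A))) (g tn + σ • g' tn - g (tn + σ))‖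
          ≤ ‖NormedSpace.exp (-((J - σ) • A))‖ * ‖g tn + σ • g' tn - g (tn + σ)‖ :=
            ContinuousLinearMap.le_opNorm _ _
        _ ≤ E * (M * h ^ 2) := mul_le_mul (hopbd _ _ hσ0.le hσ1 hJh₀) hvb (norm_nonneg _) hE0.le
  have B2 : ‖(1 / (c₂ * h)) • ∫ σ in (0:ℝ)..J,
      σ • (NormedSpace.exp (-((J - σ) • A))) R‖ ≤ E * K₂ / c₂ * h ^ 3 := by
    have hcpos : (0:ℝ) ≤ 1 / (c₂ * h) := by positivity
    have hbd := intervalIntegral.norm_integral_le_of_norm_le_const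
      (C := h * (E * (K₂ * h ^ 2)))
      (f := fun σ => σ • (NormedSpace.exp (-((J - σ) • A))) R)
      (a := 0) (b := J) ?_
    · rw [norm_smul, Real.norm_eq_abs, abs_of_nonneg hcpos]
      have h4 : ‖∫ σ in (0:ℝ)..J, σ • (NormedSpace.exp (-((J - σ) • A))) R‖ ≤
          h * (E * (K₂ * h ^ 2)) * h := by
        refine hbd.trans ?_
        rw [sub_zero, abs_of_nonneg hJ0]
        exact mul_le_mul_of_nonneg_left hJh
          (mul_nonneg hh0.le (mul_nonneg hE0.le (mul_nonneg hK₂0 (sq_nonneg h))))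
      refine (mul_le_mul_of_nonneg_left h4 hcpos).trans (le_of_eq ?_)
      have hcne : c₂ ≠ 0 := hc0.ne'
      have hhne : h ≠ 0 := hh0.ne'
      field_simp
    · intro σ hσ
      rw [Set.uIoc_of_le hJ0] at hσ
      obtain ⟨hσ0, hσ1⟩ := hσ
      rw [norm_smul, Real.norm_eq_abs, abs_of_nonneg hσ0.le]
      have hR2 : ‖(NormedSpace.exp (-((J - σ) • A))) R‖ ≤ E * (K₂ * h ^ 2) :=
        (ContinuousLinearMap.le_opNorm _ _).trans
          (mul_le_mul (hopbd _ _ hσ0.le hσ1 hJh₀) hRbound (norm_nonneg _) hE0.le)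
      exact mul_le_mul (by linarith) hR2 (norm_nonneg _) hh0.le
  refine (norm_add_le _ _).trans ?_
  have hc3 : (0:ℝ) ≤ h ^ 3 := by positivity
  nlinarith [B1, B2, mul_nonneg hEG hc3, mul_nonneg hEK hc3]
end
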